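/- Under the Beta-Binomial model-size prior with Beta(1,b) hyperprior, i.e. P_p(k) = C(p,k) B(1+k, b+p-k)/B(1,b) for a fixed b > 0, the ratio P_p(k+1)/P_p(k) converges to 1 as p → ∞, for each fixed integer k ≥ 0. -/

import Mathlib

/-! Writing `x = b + p - k - 1`, the recurrences `Γ(s + 1) = s Γ(s)` and
`C(p, k + 1) (k + 1) = C(p, k) (p - k)` collapse the ratio `P_p(k + 1) / P_p(k)` to
`(p - k) / (p + b - k - 1)`, a ratio of two linear functions of `p` with equal leading
coefficients. -/

open Filter

noncomputable def betaFn (a b : ℝ) : ℝ := Real.Gamma a * Real.Gamma b / Real.Gamma (a + b)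

lemma betaFn_pos {a b : ℝ} (ha : 0 < a) (hb : 0 < b) : 0 < betaFn a b := by
  unfold betaFn
  have := Real.Gamma_pos_of_pos ha
  have := Real.Gamma_pos_of_pos hb
  have := Real.Gamma_pos_of_pos (add_pos ha hb)
  positivity

lemma mul_betaFn_add_one_left {a x : ℝ} (ha : a ≠ 0) (hx : x ≠ 0) :
    x * betaFn (a + 1) x = a * betaFn a (x + 1) := by
  unfold betaFn
  rw [Real.Gamma_add_one ha, Real.Gamma_add_one hx, add_right_comm]
  ring

lemma Nat.cast_choose_succ_mul (R : Type*) [CommRing R] (p k : ℕ) :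
    (p.choose (k + 1) : R) * (k + 1) = p.choose k * (p - k) := by
  rcases le_or_gt k p with hkp | hpk
  · exact_mod_cast congrArg (Nat.cast : ℕ → R) (Nat.choose_succ_right_eq p k)
  · simp [Nat.choose_eq_zero_of_lt hpk, Nat.choose_eq_zero_of_lt (Nat.lt_succ_of_lt hpk)]

noncomputable def betaBinomialPrior (b : ℝ) (p k : ℕ) : ℝ :=
  p.choose k * betaFn (1 + k) (b + p - k) / betaFn 1 b

lemma betaBinomialPrior_pos {b : ℝ} (hb : 0 < b) {p k : ℕ} (hkp : k ≤ p) :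
    0 < betaBinomialPrior b p k := by
  have : 0 < b + p - k := by
    have : (k : ℝ) ≤ p := by exact_mod_cast hkp
    linarith
  have := betaFn_pos (by positivity : (0 : ℝ) < 1 + k) this
  have := betaFn_pos one_pos hb
  have : (0 : ℝ) < p.choose k := by exact_mod_cast Nat.choose_pos hkp
  unfold betaBinomialPrior
  positivity

lemma mul_betaBinomialPrior_succ {b : ℝ} {p k : ℕ} (hx : b + p - k - 1 ≠ 0) :
    (b + p - k - 1) * betaBinomialPrior b p (k + 1) = (p - k) * betaBinomialPrior b p k := by
  have hbeta := mul_betaFn_add_one_left (a := 1 + k) (by positivity) hx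
  have hchoose := Nat.cast_choose_succ_mul ℝ p k
  unfold betaBinomialPrior
  rw [show b + p - (k + 1 : ℕ) = b + p - k - 1 by push_cast; ring,
    show (1 : ℝ) + (k + 1 : ℕ) = 1 + k + 1 by push_cast; ring]
  set x := b + p - k - 1
  rw [show b + p - k = x + 1 by ring]
  linear_combination (p.choose (k + 1) : ℝ) / betaFn 1 b * hbeta
    + betaFn (1 + k) (x + 1) / betaFn 1 b * hchoose

lemma betaBinomialPrior_succ_div {b : ℝ} (hb : 0 < b) {p k : ℕ} (hkp : k < p) :
    betaBinomialPrior b p (k + 1) / betaBinomialPrior b p k = (p - k) / (b + p - k - 1) := by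
  have hx : 0 < b + p - k - 1 := by
    have : (k : ℝ) + 1 ≤ p := by exact_mod_cast hkp
    linarith
  rw [div_eq_div_iff (betaBinomialPrior_pos hb hkp.le).ne' hx.ne', mul_comm,
    mul_betaBinomialPrior_succ hx.ne', mul_comm]

/-- Under a Beta(1,b) hyperprior with fixed b, the model-size ratio tends to 1. -/
theorem stmt6 (b : ℝ) (hb : 0 < b) (k : ℕ) :
    Tendsto (fun p : ℕ =>
        ((p.choose (k + 1) : ℝ) * betaFn (1 + ((k : ℝ) + 1)) (b + (p : ℝ) - ((k : ℝ) + 1)) /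
            betaFn 1 b) /
        ((p.choose k : ℝ) * betaFn (1 + (k : ℝ)) (b + (p : ℝ) - (k : ℝ)) / betaFn 1 b))
      atTop (nhds 1) := by
  have hlinear : Tendsto (fun p : ℕ => (-k + p : ℝ) / (b - k - 1 + p)) atTop (nhds 1) := by
    simpa using tendsto_add_mul_div_add_mul_atTop_nhds (-k : ℝ) (b - k - 1) 1 one_ne_zero
  refine hlinear.congr' ?_
  filter_upwards [eventually_gt_atTop k] with p hkp
  have hratio := betaBinomialPrior_succ_div hb hkp
  simp only [betaBinomialPrior, Nat.cast_succ] at hratio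
  rw [hratio]
  ring
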